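/- arXiv:2603.08325 — 2 statements merged into one kernel-verified Lean document; each statement's English description precedes it below -/
import Mathlib

section
/- For an L-th order channel with weight function Λ(x,y) = Σ_{i=1}^N ln P(y_i | x_{i-L},...,x_i) and Rel(S) = Λ(x*,y) − Λ(f_S(x*),y): if W = W₁ ∪ W₂ with W₁, W₂ disjoint nonempty subsets of {1,...,N} and min(W₂) − max(W₁) > L, then Rel(W) = Rel(W₁) + Rel(W₂). -/
/-- Flip the bits of `x` at the positions in `S`. -/
def flipSeq (S : Finset ℕ) (x : ℕ → Bool) : ℕ → Bool :=
  fun i => if i ∈ S then !(x i) else x i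

/-- `L`-th order weight function: `Λ(x,y) = Σ_{i=1}^N ln P(y_i | x_{i-L},…,x_i)`,
where `ℓ i x = ln P(y_i | x_{i-L:i})` depends on `x` only through the window
`{i-L, …, i}` (hypothesis `hloc` below). -/
noncomputable def LamL (N : ℕ) (ℓ : ℕ → (ℕ → Bool) → ℝ) (x : ℕ → Bool) : ℝ :=
  ∑ i ∈ Finset.Icc 1 N, ℓ i x

/-- Sequence reliability for the `L`-th order channel. -/
noncomputable def RelL (N : ℕ) (ℓ : ℕ → (ℕ → Bool) → ℝ) (xs : ℕ → Bool)
    (S : Finset ℕ) : ℝ :=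
  LamL N ℓ xs - LamL N ℓ (flipSeq S xs)

/-
Flipping `W₁ ∪ W₂` changes the term `ln P(y_i | x_{i-L:i})` exactly as flipping whichever of
`W₁`, `W₂` meets the window `{i-L, …, i}`, and the gap `min W₂ - max W₁ > L` guarantees that no
window meets both. So each summand of `Rel(W₁ ∪ W₂)` is the sum of the corresponding summands of
`Rel(W₁)` and `Rel(W₂)`, one of which vanishes.
-/

section FlipSeq

variable {A B S : Finset ℕ} {x : ℕ → Bool} {j : ℕ}

theorem flipSeq_apply_of_notMem (h : j ∉ S) : flipSeq S x j = x j := by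
  simp [flipSeq, h]

theorem flipSeq_union_apply_of_notMem_right (h : j ∉ B) :
    flipSeq (A ∪ B) x j = flipSeq A x j := by
  simp [flipSeq, h]

theorem flipSeq_union_apply_of_notMem_left (h : j ∉ A) :
    flipSeq (A ∪ B) x j = flipSeq B x j := by
  rw [Finset.union_comm, flipSeq_union_apply_of_notMem_right h]

end FlipSeq

theorem sub_flipSeq_union_of_local {f : (ℕ → Bool) → ℝ} {I A B : Finset ℕ}
    (hf : ∀ x x' : ℕ → Bool, (∀ j ∈ I, x j = x' j) → f x = f x')
    (hI : (∀ j ∈ I, j ∉ A) ∨ (∀ j ∈ I, j ∉ B)) (x : ℕ → Bool) :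
    f x - f (flipSeq (A ∪ B) x) = (f x - f (flipSeq A x)) + (f x - f (flipSeq B x)) := by
  rcases hI with hA | hB
  · have hflipA : f (flipSeq A x) = f x :=
      hf _ _ fun j hj => flipSeq_apply_of_notMem (hA j hj)
    have hflipAB : f (flipSeq (A ∪ B) x) = f (flipSeq B x) :=
      hf _ _ fun j hj => flipSeq_union_apply_of_notMem_left (hA j hj)
    rw [hflipA, hflipAB]; ring
  · have hflipB : f (flipSeq B x) = f x :=
      hf _ _ fun j hj => flipSeq_apply_of_notMem (hB j hj)
    have hflipAB : f (flipSeq (A ∪ B) x) = f (flipSeq A x) :=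
      hf _ _ fun j hj => flipSeq_union_apply_of_notMem_right (hB j hj)
    rw [hflipB, hflipAB]; ring

theorem RelL_union_of_window_separated {L N : ℕ} {ℓ : ℕ → (ℕ → Bool) → ℝ}
    (hloc : ∀ i : ℕ, ∀ x x' : ℕ → Bool,
      (∀ j ∈ Finset.Icc (i - L) i, x j = x' j) → ℓ i x = ℓ i x')
    {A B : Finset ℕ}
    (hsep : ∀ i, (∀ j ∈ Finset.Icc (i - L) i, j ∉ A) ∨ (∀ j ∈ Finset.Icc (i - L) i, j ∉ B))
    (xs : ℕ → Bool) :
    RelL N ℓ xs (A ∪ B) = RelL N ℓ xs A + RelL N ℓ xs B := by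
  simp only [RelL, LamL, ← Finset.sum_sub_distrib, ← Finset.sum_add_distrib]
  exact Finset.sum_congr rfl fun i _ => sub_flipSeq_union_of_local (hloc i) (hsep i) xs

theorem window_separated_of_gap {L : ℕ} {A B : Finset ℕ} (hgap : ∀ a ∈ A, ∀ b ∈ B, a + L < b)
    (i : ℕ) : (∀ j ∈ Finset.Icc (i - L) i, j ∉ A) ∨ (∀ j ∈ Finset.Icc (i - L) i, j ∉ B) := by
  by_contra! h
  obtain ⟨⟨a, ha, haA⟩, ⟨b, hb, hbB⟩⟩ := h
  have := hgap a haA b hbB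
  simp only [Finset.mem_Icc] at ha hb
  omega

theorem rel_decomposable_L_general (L N : ℕ) (ℓ : ℕ → (ℕ → Bool) → ℝ)
    (hloc : ∀ i : ℕ, ∀ x x' : ℕ → Bool,
      (∀ j ∈ Finset.Icc (i - L) i, x j = x' j) → ℓ i x = ℓ i x')
    (xs : ℕ → Bool) (W₁ W₂ : Finset ℕ) (h₁ : W₁.Nonempty) (h₂ : W₂.Nonempty)
    (hgap : W₁.max' h₁ + L < W₂.min' h₂) :
    RelL N ℓ xs (W₁ ∪ W₂) = RelL N ℓ xs W₁ + RelL N ℓ xs W₂ := by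
  have hgap' : ∀ a ∈ W₁, ∀ b ∈ W₂, a + L < b := fun a ha b hb =>
    calc a + L ≤ W₁.max' h₁ + L := Nat.add_le_add_right (W₁.le_max' a ha) L
      _ < W₂.min' h₂ := hgap
      _ ≤ b := W₂.min'_le b hb
  exact RelL_union_of_window_separated hloc (window_separated_of_gap hgap') xs

/-- Lemma 4: additivity of sequence reliability over sets separated by more than
`L` indices (`L`-th order channel). -/
theorem rel_decomposable_L (L N : ℕ) (ℓ : ℕ → (ℕ → Bool) → ℝ)
    (hloc : ∀ i : ℕ, ∀ x x' : ℕ → Bool,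
      (∀ j ∈ Finset.Icc (i - L) i, x j = x' j) → ℓ i x = ℓ i x')
    (xs : ℕ → Bool) (W₁ W₂ : Finset ℕ) (h₁ : W₁.Nonempty) (h₂ : W₂.Nonempty)
    (hs₁ : W₁ ⊆ Finset.Icc 1 N) (hs₂ : W₂ ⊆ Finset.Icc 1 N)
    (hdisj : Disjoint W₁ W₂)
    (hgap : W₁.max' h₁ + L < W₂.min' h₂) :
    RelL N ℓ xs (W₁ ∪ W₂) = RelL N ℓ xs W₁ + RelL N ℓ xs W₂ :=
  rel_decomposable_L_general L N ℓ hloc xs W₁ W₂ h₁ h₂ hgap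
end

section
/- For a first-order channel, let e(m) = x* ⊕ x(m) be the error pattern of codeword x(m) relative to the hard detection sequence x*, with error-burst decomposition I₁,...,I_ζ. Then the sum of burst reliabilities satisfies Σ_{t=1}^{ζ} Rel(I_t) = Λ(x*, y) − Λ(x(m), y). -/
/-- First-order weight function. -/
noncomputable def Lam1 (N : ℕ) (ℓ : ℕ → Bool → Bool → ℝ) (x : ℕ → Bool) : ℝ :=
  ∑ i ∈ Finset.Icc 1 N, ℓ i (x (i - 1)) (x i)

/-- Sequence reliability. -/
noncomputable def Rel1 (N : ℕ) (ℓ : ℕ → Bool → Bool → ℝ) (xs : ℕ → Bool)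
    (S : Finset ℕ) : ℝ :=
  Lam1 N ℓ xs - Lam1 N ℓ (flipSeq S xs)

/-- Error-burst partition for the first-order channel. -/
def IsBurstPartition1 (I : Finset ℕ) (P : Finset (Finset ℕ)) : Prop :=
  (∀ B ∈ P, B.Nonempty) ∧
  (∀ B ∈ P, ∀ C ∈ P, B ≠ C → Disjoint B C) ∧
  (P.sup id = I) ∧
  (∀ B ∈ P, ∀ a ∈ B, ∀ b ∈ B, ∀ c : ℕ, a ≤ c → c ≤ b → c ∈ B) ∧
  (∀ B ∈ P, ∀ C ∈ P, B ≠ C → ∀ a ∈ B, ∀ b ∈ C, a + 2 ≤ b ∨ b + 2 ≤ a)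

open Finset

section Local

variable {α β : Type*} [DecidableEq α] [AddCommGroup β]

theorem sum_sub_eq_sub_sup_of_local {P : Finset (Finset α)} {W : Finset α}
    (F : Finset α → β) (hF : ∀ S T, S ∩ W = T ∩ W → F S = F T)
    (hP : ∀ B ∈ P, ∀ C ∈ P, ¬Disjoint B W → ¬Disjoint C W → B = C) :
    ∑ B ∈ P, (F ∅ - F B) = F ∅ - F (P.sup id) := by
  have hfar : ∀ B, Disjoint B W → F B = F ∅ := fun B hB =>
    hF B ∅ (by rw [disjoint_iff_inter_eq_empty.mp hB, empty_inter])
  by_cases hmeet : ∃ B₀ ∈ P, ¬Disjoint B₀ W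
  · obtain ⟨B₀, hB₀, hB₀W⟩ := hmeet
    have hsup : P.sup id ∩ W = B₀ ∩ W := by
      ext j
      simp only [mem_inter, mem_sup, id]
      constructor
      · rintro ⟨⟨C, hC, hjC⟩, hjW⟩
        have hCW : ¬Disjoint C W := not_disjoint_iff.mpr ⟨j, hjC, hjW⟩
        exact ⟨hP C hC B₀ hB₀ hCW hB₀W ▸ hjC, hjW⟩
      · exact fun ⟨hj, hjW⟩ => ⟨⟨B₀, hB₀, hj⟩, hjW⟩
    rw [sum_eq_single_of_mem B₀ hB₀, hF _ _ hsup]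
    intro B hB hne
    rw [hfar B (by_contra fun hBW => hne (hP B hB B₀ hB₀ hBW hB₀W)), sub_self]
  · push Not at hmeet
    rw [hfar _ ((Finset.disjoint_sup_left (f := id)).mpr hmeet), sub_self]
    exact sum_eq_zero fun B hB => by rw [hfar B (hmeet B hB), sub_self]

end Local

@[simp]
theorem flipSeq_empty (x : ℕ → Bool) : flipSeq ∅ x = x := by
  funext i
  simp [flipSeq]

theorem flipSeq_apply_eq_of_inter_eq {S T W : Finset ℕ} (x : ℕ → Bool) {j : ℕ} (hj : j ∈ W)
    (hST : S ∩ W = T ∩ W) : flipSeq S x j = flipSeq T x j := by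
  have hmem : j ∈ S ↔ j ∈ T := by
    simpa [hj] using congrArg (j ∈ ·) hST
  simp only [flipSeq, hmem]

theorem Rel1_eq_sum (N : ℕ) (ℓ : ℕ → Bool → Bool → ℝ) (x : ℕ → Bool) (S : Finset ℕ) :
    Rel1 N ℓ x S = ∑ i ∈ Icc 1 N,
      (ℓ i (x (i - 1)) (x i) - ℓ i (flipSeq S x (i - 1)) (flipSeq S x i)) := by
  rw [Rel1, Lam1, Lam1, sum_sub_distrib]

theorem IsBurstPartition1.sup_eq {D : Finset ℕ} {P : Finset (Finset ℕ)}
    (hP : IsBurstPartition1 D P) : P.sup id = D :=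
  hP.2.2.1

theorem IsBurstPartition1.eq_of_not_disjoint_window {D : Finset ℕ} {P : Finset (Finset ℕ)}
    (hP : IsBurstPartition1 D P) (i : ℕ) :
    ∀ B ∈ P, ∀ C ∈ P, ¬Disjoint B {i - 1, i} → ¬Disjoint C {i - 1, i} → B = C := by
  intro B hB C hC hBW hCW
  obtain ⟨a, haB, haW⟩ := not_disjoint_iff.mp hBW
  obtain ⟨b, hbC, hbW⟩ := not_disjoint_iff.mp hCW
  by_contra hne
  simp only [mem_insert, mem_singleton] at haW hbW
  rcases hP.2.2.2.2 B hB C hC hne a haB b hbC with h | h <;> omega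

theorem sum_burst_rel_general (N : ℕ) (ℓ : ℕ → Bool → Bool → ℝ) (xs : ℕ → Bool)
    (D : Finset ℕ)
    (P : Finset (Finset ℕ)) (hP : IsBurstPartition1 D P) :
    ∑ B ∈ P, Rel1 N ℓ xs B = Lam1 N ℓ xs - Lam1 N ℓ (flipSeq D xs) := by
  set F : ℕ → Finset ℕ → ℝ := fun i S => ℓ i (flipSeq S xs (i - 1)) (flipSeq S xs i)
  have hF : ∀ i S T, S ∩ {i - 1, i} = T ∩ {i - 1, i} → F i S = F i T := fun i S T h => by
    simp only [F, flipSeq_apply_eq_of_inter_eq xs (mem_insert_self _ _) h,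
      flipSeq_apply_eq_of_inter_eq xs (mem_insert_of_mem (mem_singleton_self _)) h]
  calc ∑ B ∈ P, Rel1 N ℓ xs B
      = ∑ i ∈ Icc 1 N, ∑ B ∈ P, (F i ∅ - F i B) := by
        simp only [Rel1_eq_sum, F, flipSeq_empty]
        exact sum_comm
    _ = ∑ i ∈ Icc 1 N, (F i ∅ - F i D) := sum_congr rfl fun i _ => by
        rw [sum_sub_eq_sub_sup_of_local (F i) (hF i) (hP.eq_of_not_disjoint_window i),
          hP.sup_eq]
    _ = Lam1 N ℓ xs - Lam1 N ℓ (flipSeq D xs) := by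
        rw [← Rel1, Rel1_eq_sum]
        simp only [F, flipSeq_empty]

/-- Key identity in Theorem 1: the sum of burst reliabilities of the error
pattern with support `D` equals `Λ(x*, y) − Λ(x(m), y)` where `x(m) = f_D(x*)`. -/
theorem sum_burst_rel (N : ℕ) (ℓ : ℕ → Bool → Bool → ℝ) (xs : ℕ → Bool)
    (D : Finset ℕ) (hD : D ⊆ Finset.Icc 1 N)
    (P : Finset (Finset ℕ)) (hP : IsBurstPartition1 D P) :
    ∑ B ∈ P, Rel1 N ℓ xs B = Lam1 N ℓ xs - Lam1 N ℓ (flipSeq D xs) :=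
  sum_burst_rel_general N ℓ xs D P hP
end
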